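/- arXiv:1712.01054 — 3 statements merged into one kernel-verified Lean document; each statement's English description precedes it below -/
import Mathlib

section
/- If f and g are monic polynomials with integer coefficients and nonzero resultant r, then the quotient ring ℤ[x]/(f, g) is finite and its cardinality equals |r|. -/
/-!
Reducing modulo the monic `g`, every class of `ℤ[x]/(f, g)` has a representative of degree
`< m + n` (`m = deg f`, `n = deg g`), and such a polynomial lies in `(f, g)` exactly when it is
`f a + g b` with `deg a < n`, `deg b < m`. So the quotient is the cokernel of the Sylvester map
`(b, a) ↦ f a + g b` between free `ℤ`-modules of rank `m + n`. Its matrix is the Sylvester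
matrix, and by the Smith normal form the cokernel of an injective map of free `ℤ`-modules of the
same finite rank has order `|det|`.
-/

open Polynomial

/-- The Sylvester matrix of two polynomials over `ℤ`. -/
def sylvester (f g : Polynomial ℤ) :
    Matrix (Fin (g.natDegree + f.natDegree)) (Fin (g.natDegree + f.natDegree)) ℤ :=
  Matrix.of fun i j =>
    if (i : ℕ) < g.natDegree then
      if (j : ℕ) ≤ (i : ℕ) + f.natDegree then f.coeff (f.natDegree + i - j) else 0
    else
      if (j : ℕ) ≤ ((i : ℕ) - g.natDegree) + g.natDegree then
        g.coeff (g.natDegree + ((i : ℕ) - g.natDegree) - j) else 0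

/-- The resultant of two polynomials, as the determinant of the Sylvester matrix. -/
def resultant (f g : Polynomial ℤ) : ℤ := (_root_.sylvester f g).det

/- The rows of `sylvester f g` are the coefficient vectors, leading coefficient first, of
`X ^ (n - 1 - i) * f` and then of `X ^ (m - 1 - i) * g`; the columns of Mathlib's
`Polynomial.sylvester f g m n` are those of `X ^ i * g` and then of `X ^ i * f`, constant
coefficient first. Reversing both index orders matches the two. -/
open Matrix in
theorem reindex_transpose_sylvester (f g : ℤ[X]) :
    (_root_.sylvester f g)ᵀ.reindex (Fin.revPerm.trans (finCongr (add_comm _ _)))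
        (Fin.revPerm.trans (finCongr (add_comm _ _))) =
      Polynomial.sylvester f g f.natDegree g.natDegree := by
  ext i j
  have hi := i.isLt
  induction j using Fin.addCases with
  | left j | right j =>
    have hj := j.isLt
    simp only [_root_.sylvester, Polynomial.sylvester, reindex_apply, Equiv.symm_trans,
      finCongr_symm, Fin.revPerm_symm, Equiv.coe_trans, submatrix_apply, Function.comp_apply,
      finCongr_apply, Fin.revPerm_apply, Fin.cast_natAdd, transpose_apply, of_apply, Fin.val_rev,
      Fin.val_addNat, Fin.val_cast, Fin.val_castAdd, tsub_le_iff_right, Set.mem_Icc,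
      Fin.addCases_left, Fin.addCases_right]
    split_ifs <;> first | rfl | omega | (congr 1; omega) |
      exact coeff_eq_zero_of_natDegree_lt (by omega)

theorem resultant_eq_polynomial_resultant (f g : ℤ[X]) :
    _root_.resultant f g = f.resultant g := by
  rw [_root_.resultant, Polynomial.resultant, ← reindex_transpose_sylvester,
    Matrix.det_reindex_self, Matrix.det_transpose]

theorem Module.Basis.natCard_quotient_range_eq_natAbs_det {ι M N : Type*} [Fintype ι]
    [DecidableEq ι] [AddCommGroup M] [AddCommGroup N] (b₁ : Basis ι ℤ M) (b₂ : Basis ι ℤ N)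
    {φ : M →ₗ[ℤ] N} (hφ : Function.Injective φ) :
    Nat.card (N ⧸ LinearMap.range φ) = (LinearMap.toMatrix b₁ b₂ φ).det.natAbs := by
  have : Module.Free ℤ N := .of_basis b₂
  have : Module.Finite ℤ N := .of_basis b₂
  rw [← Submodule.natAbs_det_basis_change b₂ _ (b₁.map (LinearEquiv.ofInjective φ hφ)),
    Basis.det_apply]
  congr 3
  ext i
  simp

namespace Polynomial

variable {R : Type*} [CommRing R]

theorem sylvesterMap_injective [IsDomain R] {f g : R[X]} {m n : ℕ} (hf : f.natDegree ≤ m)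
    (hg : g.natDegree ≤ n) (h : f.resultant g m n ≠ 0) :
    Function.Injective (sylvesterMap f g hf hg) := by
  have adj_comp (x) : adjSylvester f g (sylvesterMap f g hf hg x) = f.resultant g m n • x :=
    LinearMap.congr_fun (adjSylvester_comp_sylveserMap f g hf hg) x
  intro x y hxy
  have := congr(adjSylvester f g $hxy)
  rw [adj_comp, adj_comp] at this
  exact smul_right_injective _ h this

theorem mem_degreeLT_of_monic_mul {g q : R[X]} {k : ℕ} (hg : g.Monic)
    (h : g * q ∈ R[X]_(k + g.natDegree)) : q ∈ R[X]_k := by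
  nontriviality R
  rcases eq_or_ne q 0 with rfl | hq
  · exact zero_mem _
  rw [mem_degreeLT, ← natDegree_lt_iff_degree_lt (hg.mul_right_ne_zero hq),
    hg.natDegree_mul' hq] at h
  rw [mem_degreeLT, ← natDegree_lt_iff_degree_lt hq]
  omega

theorem modByMonic_mem_degreeLT (p : R[X]) {g : R[X]} (hg : g.Monic) :
    p %ₘ g ∈ R[X]_(g.natDegree) := by
  nontriviality R
  rw [mem_degreeLT, ← degree_eq_natDegree hg.ne_zero]
  exact degree_modByMonic_lt p hg

noncomputable def degreeLTToQuotient (I : Ideal R[X]) (k : ℕ) : R[X]_k →ₗ[R] R[X] ⧸ I :=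
  (Ideal.Quotient.mkₐ R I).toLinearMap ∘ₗ (degreeLT R k).subtype

@[simp]
theorem degreeLTToQuotient_apply (I : Ideal R[X]) (k : ℕ) (p : R[X]_k) :
    degreeLTToQuotient I k p = Ideal.Quotient.mk I p :=
  rfl

theorem degreeLTToQuotient_surjective {I : Ideal R[X]} {g : R[X]} (hg : g.Monic) (hgI : g ∈ I)
    {k : ℕ} (hk : g.natDegree ≤ k) : Function.Surjective (degreeLTToQuotient I k) := by
  intro y
  obtain ⟨p, rfl⟩ := Ideal.Quotient.mk_surjective y
  refine ⟨⟨p %ₘ g, degreeLT_mono hk (modByMonic_mem_degreeLT p hg)⟩, Ideal.Quotient.eq.2 ?_⟩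
  show p %ₘ g - p ∈ I
  rw [modByMonic_eq_sub_mul_div, sub_sub_cancel_left]
  exact I.neg_mem (I.mul_mem_right _ hgI)

theorem ker_degreeLTToQuotient_span_pair (f : R[X]) {g : R[X]} (hg : g.Monic) :
    LinearMap.ker (degreeLTToQuotient (Ideal.span {f, g}) (f.natDegree + g.natDegree)) =
      LinearMap.range (sylvesterMap f g le_rfl le_rfl) := by
  ext ⟨p, hp⟩
  rw [LinearMap.mem_ker, degreeLTToQuotient_apply, Ideal.Quotient.eq_zero_iff_mem,
    Ideal.mem_span_pair]
  constructor
  · rintro ⟨a, b, rfl⟩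
    -- `a * f + b * g = f * (a %ₘ g) + g * (b + a /ₘ g * f)` with the first cofactor of degree `< n`
    have ha : a %ₘ g ∈ R[X]_(g.natDegree) := modByMonic_mem_degreeLT a hg
    have hfa : f * (a %ₘ g) ∈ R[X]_(f.natDegree + g.natDegree) := by
      simpa using (sylvesterMap f g le_rfl le_rfl (0, ⟨_, ha⟩)).2
    have hb : b + a /ₘ g * f ∈ R[X]_(f.natDegree) := by
      refine mem_degreeLT_of_monic_mul hg ?_
      have : g * (b + a /ₘ g * f) = (a * f + b * g) - f * (a %ₘ g) := by
        rw [modByMonic_eq_sub_mul_div]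
        ring
      exact this ▸ sub_mem hp hfa
    refine ⟨(⟨_, hb⟩, ⟨_, ha⟩), Subtype.ext ?_⟩
    show f * (a %ₘ g) + g * (b + a /ₘ g * f) = a * f + b * g
    rw [modByMonic_eq_sub_mul_div]
    ring
  · rintro ⟨⟨q, r⟩, hqr⟩
    refine ⟨r, q, ?_⟩
    rw [← Subtype.ext_iff.1 hqr, sylvesterMap_apply_coe]
    ring

noncomputable def quotientSpanPairEquiv (f : R[X]) {g : R[X]} (hg : g.Monic) :
    (R[X] ⧸ Ideal.span {f, g}) ≃ₗ[R]
      R[X]_(f.natDegree + g.natDegree) ⧸ LinearMap.range (sylvesterMap f g le_rfl le_rfl) :=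
  ((degreeLTToQuotient _ _).quotKerEquivOfSurjective
      (degreeLTToQuotient_surjective hg (Ideal.subset_span (by simp)) (by omega))).symm.trans
    (Submodule.quotEquivOfEq _ _ (ker_degreeLTToQuotient_span_pair f hg))

end Polynomial

theorem card_quotient_eq_natAbs_resultant_general (f g : Polynomial ℤ) (hg : g.Monic)
    (hr : _root_.resultant f g ≠ 0) :
    Finite (Polynomial ℤ ⧸ Ideal.span {f, g}) ∧
      Nat.card (Polynomial ℤ ⧸ Ideal.span {f, g}) = (_root_.resultant f g).natAbs := by
  rw [resultant_eq_polynomial_resultant] at hr ⊢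
  have hcard : Nat.card (ℤ[X] ⧸ Ideal.span {f, g}) = (f.resultant g).natAbs := by
    rw [Nat.card_congr (quotientSpanPairEquiv f hg).toEquiv,
      ((degreeLT.basis ℤ _).prod (degreeLT.basis ℤ _)).reindex finSumFinEquiv
        |>.natCard_quotient_range_eq_natAbs_det (degreeLT.basis ℤ _)
        (sylvesterMap_injective le_rfl le_rfl hr),
      toMatrix_sylvesterMap']
    rfl
  exact ⟨Nat.finite_of_card_ne_zero (by rw [hcard]; exact Int.natAbs_ne_zero.2 hr), hcard⟩

theorem card_quotient_eq_natAbs_resultant (f g : Polynomial ℤ) (hf : f.Monic) (hg : g.Monic)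
    (hr : _root_.resultant f g ≠ 0) :
    Finite (Polynomial ℤ ⧸ Ideal.span {f, g}) ∧
      Nat.card (Polynomial ℤ ⧸ Ideal.span {f, g}) = (_root_.resultant f g).natAbs :=
  card_quotient_eq_natAbs_resultant_general f g hg hr
end

section
/- For a prime p, β(m)/m tends to p − 1 as m → ∞, where β(m) = min{j : v_p(j!) ≥ m}; consequently B(s)/s² tends to (p−1)/2 as s → ∞. -/
/-- `β p m` is the least `j` with `v_p(j!) ≥ m`. -/
noncomputable def beta (p m : ℕ) : ℕ := sInf {j : ℕ | m ≤ padicValNat p (Nat.factorial j)}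

/-- `B p s = ∑_{m=1}^s β p m`. -/
noncomputable def bigB (p s : ℕ) : ℕ := ∑ m ∈ Finset.Icc 1 s, beta p m

/-!
Legendre's formula `(p - 1) v_p(j!) = j - s_p(j)`, where `s_p` is the base-`p` digit sum, gives
`(p - 1) m ≤ β(m)`. Applied to `j = β(m) - 1`, for which `v_p(j!) < m`, it gives
`β(m) ≤ (p - 1) m + s_p(j)`, and `s_p(j) = O(log m)`; hence `β(m) / m → p - 1`.

The statement about `B` holds for any sequence with `a(m) / m → c`: writing `a(m) = c m + m u(m)`
with `u → 0`, the error `∑_{m ≤ s} m u(m)` is at most `s` times a Cesàro sum of `|u|`, which is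
`o(s²)`, so `(∑_{m ≤ s} a(m)) / s² → c / 2`.
-/

open Filter Topology Finset
open scoped Nat

lemma Nat.digits_sum_le_mul_log_add_one {b : ℕ} (hb : 1 < b) (n : ℕ) :
    (b.digits n).sum ≤ (b - 1) * (Nat.log b n + 1) := by
  rcases eq_or_ne n 0 with rfl | hn
  · simp
  rw [← Nat.length_digits b n hb hn, mul_comm, ← smul_eq_mul]
  exact List.sum_le_card_nsmul _ _ fun d hd => Nat.le_sub_one_of_lt (Nat.digits_lt_base hb hd)

lemma tendsto_natLog_div_atTop (b : ℕ) :
    Tendsto (fun n : ℕ => (Nat.log b n : ℝ) / n) atTop (𝓝 0) := by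
  have hlog : Tendsto (fun n : ℕ => Real.log n / n / Real.log b) atTop (𝓝 0) := by
    simpa using ((Real.tendsto_pow_log_div_mul_add_atTop 1 0 1 one_ne_zero).comp
      tendsto_natCast_atTop_atTop).div_const (Real.log b)
  refine tendsto_of_tendsto_of_tendsto_of_le_of_le tendsto_const_nhds hlog
    (fun n => by positivity) (fun n => ?_)
  calc (Nat.log b n : ℝ) / n ≤ Real.logb b n / n := by
        gcongr; exact Real.natLog_le_logb n b
    _ = Real.log n / n / Real.log b := by rw [Real.logb]; ring

lemma sum_Icc_one_natCast (s : ℕ) : ∑ m ∈ Icc 1 s, (m : ℝ) = s * (s + 1) / 2 := by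
  induction s with
  | zero => simp
  | succ n ih => rw [sum_Icc_succ_top (by omega), ih]; push_cast; ring

lemma tendsto_sum_Icc_mul_div_sq {u : ℕ → ℝ} (hu : Tendsto u atTop (𝓝 0)) :
    Tendsto (fun s : ℕ => (∑ m ∈ Icc 1 s, m * u m) / s ^ 2) atTop (𝓝 0) := by
  have hcesaro : Tendsto (fun s : ℕ => (s⁻¹ : ℝ) * ∑ k ∈ range s, |u (1 + k)|) atTop (𝓝 0) := by
    simpa [Function.comp_def, add_comm] using
      ((continuous_abs.tendsto 0).comp (hu.comp (tendsto_add_atTop_nat 1))).cesaro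
  refine squeeze_zero_norm (fun s => ?_) hcesaro
  have hshift : ∑ k ∈ range s, |u (1 + k)| = ∑ m ∈ Icc 1 s, |u m| := by
    rw [← Ico_add_one_right_eq_Icc, sum_Ico_eq_sum_range, Nat.add_sub_cancel]
  have hbound : |∑ m ∈ Icc 1 s, m * u m| ≤ ∑ m ∈ Icc 1 s, s * |u m| := by
    refine (abs_sum_le_sum_abs _ _).trans (sum_le_sum fun m hm => ?_)
    rw [abs_mul, Nat.abs_cast]
    gcongr
    exact (mem_Icc.1 hm).2
  rcases eq_or_ne s 0 with rfl | hs
  · simp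
  calc ‖(∑ m ∈ Icc 1 s, m * u m) / s ^ 2‖ ≤ (∑ m ∈ Icc 1 s, s * |u m|) / s ^ 2 := by
        rw [Real.norm_eq_abs, abs_div, abs_of_nonneg (sq_nonneg (s : ℝ))]
        exact div_le_div_of_nonneg_right hbound (sq_nonneg (s : ℝ))
    _ = (s⁻¹ : ℝ) * ∑ k ∈ range s, |u (1 + k)| := by
        rw [hshift, ← mul_sum]
        field_simp

lemma tendsto_sum_Icc_div_sq {a : ℕ → ℝ} {c : ℝ}
    (ha : Tendsto (fun m : ℕ => a m / m) atTop (𝓝 c)) :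
    Tendsto (fun s : ℕ => (∑ m ∈ Icc 1 s, a m) / s ^ 2) atTop (𝓝 (c / 2)) := by
  have hu : Tendsto (fun m : ℕ => a m / m - c) atTop (𝓝 0) := by
    simpa using ha.sub_const c
  have hgauss : Tendsto (fun s : ℕ => c / 2 * (1 + 1 / s)) atTop (𝓝 (c / 2)) := by
    simpa using ((tendsto_const_nhds (x := (1 : ℝ))).add
      tendsto_one_div_atTop_nhds_zero_nat).const_mul (c / 2)
  have hlim := hgauss.add (tendsto_sum_Icc_mul_div_sq hu)
  rw [add_zero] at hlim
  refine hlim.congr' ?_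
  filter_upwards [eventually_ne_atTop 0] with s hs
  have hsplit : ∑ m ∈ Icc 1 s, a m =
      c * ∑ m ∈ Icc 1 s, (m : ℝ) + ∑ m ∈ Icc 1 s, m * (a m / m - c) := by
    rw [mul_sum, ← sum_add_distrib]
    refine sum_congr rfl fun m hm => ?_
    have : (m : ℝ) ≠ 0 := by exact_mod_cast Nat.one_le_iff_ne_zero.1 (mem_Icc.1 hm).1
    field_simp
    ring
  rw [hsplit, sum_Icc_one_natCast]
  field_simp

section Beta

variable {p : ℕ}

lemma padicValNat_factorial_lt_of_lt_beta {m j : ℕ} (hj : j < beta p m) :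
    padicValNat p j ! < m :=
  not_le.1 (Nat.notMem_of_lt_sInf (s := {j | m ≤ padicValNat p j !}) hj)

variable [hp : Fact p.Prime]

lemma le_padicValNat_factorial_mul (m : ℕ) : m ≤ padicValNat p (p * m)! := by
  rw [padicValNat_factorial_mul]
  exact Nat.le_add_left m _

lemma le_padicValNat_factorial_beta (m : ℕ) : m ≤ padicValNat p (beta p m)! :=
  Nat.sInf_mem (s := {j | m ≤ padicValNat p j !}) ⟨p * m, le_padicValNat_factorial_mul m⟩

lemma beta_le_mul (m : ℕ) : beta p m ≤ p * m :=
  Nat.sInf_le (le_padicValNat_factorial_mul m)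

lemma sub_one_mul_le_beta (m : ℕ) : (p - 1) * m ≤ beta p m :=
  calc (p - 1) * m ≤ (p - 1) * padicValNat p (beta p m)! :=
        Nat.mul_le_mul_left _ (le_padicValNat_factorial_beta m)
    _ = beta p m - (p.digits (beta p m)).sum := sub_one_mul_padicValNat_factorial _
    _ ≤ beta p m := Nat.sub_le _ _

lemma beta_le (m : ℕ) : beta p m ≤ (p - 1) * m + (p - 1) * (Nat.log p m + 2) := by
  rcases eq_or_ne m 0 with rfl | hm
  · exact (beta_le_mul 0).trans (by simp)
  obtain ⟨j, hj⟩ : ∃ j, beta p m = j + 1 := Nat.exists_eq_add_one_of_ne_zero fun h => hm <| by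
    simpa [h] using le_padicValNat_factorial_beta (p := p) m
  have hp1 := hp.out.one_lt
  have hval : (p - 1) * padicValNat p j ! + (p - 1) ≤ (p - 1) * m := by
    simpa only [Nat.mul_add_one] using Nat.mul_le_mul_left (p - 1)
      (padicValNat_factorial_lt_of_lt_beta (hj ▸ j.lt_add_one))
  have hlog : Nat.log p j ≤ Nat.log p m + 1 := by
    rw [← Nat.log_mul_base hp1 hm]
    exact Nat.log_mono_right (by linarith [beta_le_mul (p := p) m])
  have hdigits : (p.digits j).sum ≤ (p - 1) * (Nat.log p m + 2) :=
    (Nat.digits_sum_le_mul_log_add_one hp1 j).trans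
      (Nat.mul_le_mul_left _ (Nat.add_le_add_right hlog 1))
  have hlegendre := sub_one_mul_padicValNat_factorial (p := p) j
  have := Nat.digit_sum_le p j
  omega

theorem tendsto_beta_div :
    Tendsto (fun m : ℕ => (beta p m : ℝ) / m) atTop (𝓝 (p - 1)) := by
  have hp1 : ((p - 1 : ℕ) : ℝ) = p - 1 := Nat.cast_pred hp.out.pos
  have hlim : Tendsto (fun m : ℕ => (p - 1 : ℝ) + (p - 1) * (Nat.log p m / m + 2 / m))
      atTop (𝓝 (p - 1)) := by
    simpa using tendsto_const_nhds.add (((tendsto_natLog_div_atTop p).add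
      (tendsto_const_div_atTop_nhds_zero_nat 2)).const_mul (p - 1 : ℝ))
  refine tendsto_of_tendsto_of_tendsto_of_le_of_le' tendsto_const_nhds hlim ?_ ?_ <;>
    filter_upwards [eventually_ne_atTop 0] with m hm
  · have hlower := (Nat.cast_le (α := ℝ)).2 (sub_one_mul_le_beta (p := p) m)
    rw [Nat.cast_mul, hp1] at hlower
    rwa [le_div_iff₀ (by positivity)]
  · have hupper := (Nat.cast_le (α := ℝ)).2 (beta_le (p := p) m)
    push_cast [hp1] at hupper
    rw [div_le_iff₀ (by positivity)]
    convert hupper using 1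
    field_simp

end Beta

theorem beta_asymptotics (p : ℕ) (hp : p.Prime) :
    Filter.Tendsto (fun m : ℕ => (beta p m : ℝ) / m) Filter.atTop (nhds (p - 1)) ∧
      Filter.Tendsto (fun s : ℕ => (bigB p s : ℝ) / s ^ 2) Filter.atTop
        (nhds ((p - 1) / 2)) := by
  have := Fact.mk hp
  refine ⟨tendsto_beta_div, ?_⟩
  simpa [bigB] using tendsto_sum_Icc_div_sq (tendsto_beta_div (p := p))
end

section
/- If p^s divides f(n) and g(n) for all n with s ≥ 1 and the resultant r of the monic polynomials f, g ∈ ℤ[x] is nonzero, then v_p(r) ≥ p. -/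
/-!
Reduce modulo `p`. Every element of `𝔽_p` is a root of `f̄` and `ḡ`, so both are divisible by
`h = ∏_{a ∈ 𝔽_p} (X - a) = X^p - X`, of degree `p`. Each row of the Sylvester matrix is the
coefficient vector of some `X^a f` or `X^b g` of degree `< N = deg f + deg g`, hence modulo `p` a
combination of the coefficient vectors of `X^k h`, `k < N - p`. So the Sylvester matrix is
`C B + p E` over `ℤ` with `B` having only `N - p` rows; expanding the determinant multilinearly
in the rows, every term either uses at least `p` rows of `p E` or repeats a row of `B`. Hence
`p^p ∣ r`, and `r ≠ 0` turns this into `v_p(r) ≥ p`.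
-/

open Polynomial

open Finset

theorem le_card_filter_eq_none_or_exists_ne_map_eq {ι κ : Type*} [Fintype ι]
    [Fintype κ] (K : ι → Option κ) {n : ℕ} (h : Fintype.card κ + n ≤ Fintype.card ι) :
    n ≤ #{i | K i = none} ∨ ∃ i j, i ≠ j ∧ K i = K j ∧ K i ≠ none := by
  classical
  refine or_iff_not_imp_left.mpr fun hn => ?_
  have hsome : #((univ : Finset κ).map .some) < #{i | K i ≠ none} := by
    have := card_filter_add_card_filter_not (s := univ) (fun i => K i = none)
    simp only [card_map, card_univ, ne_eq] at this ⊢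
    omega
  obtain ⟨i, hi, j, -, hij, hK⟩ := exists_ne_map_eq_of_card_lt_of_maps_to (f := K) hsome
    fun i hi => by
      obtain ⟨k, hk⟩ := Option.ne_none_iff_exists'.mp (mem_filter.mp hi).2
      simp [hk]
  exact ⟨i, j, hij, hK, (mem_filter.mp hi).2⟩

namespace Matrix

variable {ι κ R : Type*} [Fintype ι] [DecidableEq ι] [Fintype κ] [CommRing R]

theorem pow_dvd_det_mul_add_smul (C : Matrix ι κ R) (B : Matrix κ ι R) (E : Matrix ι ι R)
    (a : R) {n : ℕ} (h : Fintype.card κ + n ≤ Fintype.card ι) :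
    a ^ n ∣ (C * B + a • E).det := by
  classical
  let t : (ι → Option κ) → ι → R := fun K i => (K i).elim a (C i)
  let M : (ι → Option κ) → Matrix ι ι R := fun K i => (K i).elim (E i) B
  have hrows :
      C * B + a • E = of fun i => ∑ o : Option κ, o.elim a (C i) • o.elim (E i) B := by
    ext i j
    simp [Fintype.sum_option, mul_apply, add_comm, Option.elim]
  have hdet : (C * B + a • E).det = ∑ K : ι → Option κ, (∏ i, t K i) * (M K).det := by
    rw [hrows]
    change detRowAlternating.toMultilinearMap
      (fun i => ∑ o : Option κ, o.elim a (C i) • o.elim (E i) B) = _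
    rw [MultilinearMap.map_sum]
    exact sum_congr rfl fun K _ => AlternatingMap.map_smul_univ _ (t K) (M K)
  rw [hdet]
  refine dvd_sum fun K _ => ?_
  rcases le_card_filter_eq_none_or_exists_ne_map_eq K h with hnone | ⟨i, j, hij, hK, hi⟩
  · refine Dvd.dvd.mul_right ?_ _
    calc a ^ n ∣ a ^ #{i | K i = none} := pow_dvd_pow a hnone
      _ = ∏ i with K i = none, t K i :=
        (prod_eq_pow_card fun i hi => by simp [t, (mem_filter.mp hi).2]).symm
      _ ∣ ∏ i, t K i := prod_dvd_prod_of_subset _ _ _ (filter_subset _ _)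
  · have : M K i = M K j := by
      obtain ⟨k, hk⟩ := Option.ne_none_iff_exists'.mp hi
      simp [M, hk, ← hK, Option.elim]
    simp [det_zero_of_row_eq hij this]

theorem pow_dvd_det_of_map_intCast_eq_mul {m n : ℕ} {A : Matrix ι ι ℤ}
    {C : Matrix ι κ (ZMod m)} {B : Matrix κ ι (ZMod m)}
    (hA : A.map (Int.castRingHom (ZMod m)) = C * B)
    (h : Fintype.card κ + n ≤ Fintype.card ι) : (m : ℤ) ^ n ∣ A.det := by
  set C' := C.map fun x => (x.cast : ℤ)
  set B' := B.map fun x => (x.cast : ℤ)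
  have hlift : (C' * B').map (Int.castRingHom (ZMod m)) = C * B := by
    simpa [C', B', Matrix.map_map, Function.comp_def, ZMod.intCast_zmod_cast] using
      Matrix.map_mul (L := C') (M := B') (f := Int.castRingHom (ZMod m))
  have hdvd : ∀ i j, ∃ e, A i j = (C' * B') i j + m * e := fun i j => by
    obtain ⟨e, he⟩ := (ZMod.intCast_zmod_eq_zero_iff_dvd (A i j - (C' * B') i j) m).mp <| by
      simpa [sub_eq_zero] using congrFun₂ (hA.trans hlift.symm) i j
    exact ⟨e, by linarith⟩
  choose E hE using hdvd
  have hAE : A = C' * B' + (m : ℤ) • Matrix.of E := by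
    ext i j
    simp [hE]
  rw [hAE]
  exact C'.pow_dvd_det_mul_add_smul B' _ _ h

end Matrix

namespace Polynomial

theorem prod_X_sub_C_dvd_of_forall_isRoot {K : Type*} [CommRing K] [IsDomain K] [Fintype K]
    {P : K[X]} (hP : ∀ a, P.IsRoot a) : ∏ a : K, (X - C a) ∣ P := by
  rcases eq_or_ne P 0 with rfl | hP0
  · exact dvd_zero _
  exact (Multiset.prod_X_sub_C_dvd_iff_le_roots hP0 _).mpr <|
    (Multiset.le_iff_subset univ.nodup).mpr fun a _ => (mem_roots hP0).mpr (hP a)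

theorem prod_X_sub_C_dvd_map_of_forall_dvd_eval {p : ℕ} [Fact p.Prime] {F : ℤ[X]}
    (hF : ∀ n : ℤ, (p : ℤ) ∣ F.eval n) :
    ∏ a : ZMod p, (X - C a) ∣ F.map (Int.castRingHom (ZMod p)) :=
  prod_X_sub_C_dvd_of_forall_isRoot fun a => by
    obtain ⟨n, rfl⟩ := ZMod.intCast_surjective a
    simpa [eval_intCast_map, ZMod.intCast_zmod_eq_zero_iff_dvd] using hF n

theorem coeff_mul_eq_sum_coeff_X_pow_mul {R : Type*} [Semiring R] {q : R[X]} {M : ℕ}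
    (hq : q.natDegree < M) (h : R[X]) (m : ℕ) :
    (q * h).coeff m = ∑ k : Fin M, q.coeff k * (X ^ (k : ℕ) * h).coeff m := by
  conv_lhs => rw [q.as_sum_range' M hq]
  rw [sum_mul, finsetSum_coeff,
    Fin.sum_univ_eq_sum_range (fun k => q.coeff k * ((X : R[X]) ^ k * h).coeff m)]
  refine sum_congr rfl fun k _ => ?_
  rw [← C_mul_X_pow_eq_monomial, mul_assoc, coeff_C_mul]

theorem exists_coeff_eq_sum_coeff_X_pow_mul_of_dvd {R : Type*} [CommSemiring R] {h P : R[X]}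
    (hh : h.Monic) (hP : h ∣ P) {M : ℕ} (hdeg : P.natDegree < M + h.natDegree) :
    ∃ q : Fin M → R, ∀ m, P.coeff m = ∑ k, q k * (X ^ (k : ℕ) * h).coeff m := by
  obtain ⟨u, rfl⟩ := hP
  rcases eq_or_ne u 0 with rfl | hu
  · exact ⟨0, by simp⟩
  rw [hh.natDegree_mul' hu] at hdeg
  exact ⟨fun k => u.coeff k, fun m => by
    rw [mul_comm h]
    exact coeff_mul_eq_sum_coeff_X_pow_mul (by omega) h m⟩

end Polynomial

theorem exists_sylvester_row (f g : ℤ[X]) (i : Fin (g.natDegree + f.natDegree)) :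
    ∃ a, ∃ F, (F = f ∨ F = g) ∧ a + F.natDegree < g.natDegree + f.natDegree ∧
      ∀ j : Fin (g.natDegree + f.natDegree),
        _root_.sylvester f g i j = (X ^ a * F).coeff (g.natDegree + f.natDegree - 1 - j) := by
  have hi := i.isLt
  by_cases hig : (i : ℕ) < g.natDegree
  · refine ⟨g.natDegree - 1 - i, f, .inl rfl, by omega, fun j => ?_⟩
    have hj := j.isLt
    rw [coeff_X_pow_mul']
    simp only [_root_.sylvester, Matrix.of_apply, if_pos hig]
    split_ifs <;> first | omega | (congr 1; omega)
  · refine ⟨g.natDegree + f.natDegree - 1 - i, g, .inr rfl, by omega, fun j => ?_⟩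
    have hj := j.isLt
    rw [coeff_X_pow_mul']
    simp only [_root_.sylvester, Matrix.of_apply, if_neg hig]
    split_ifs <;> first | omega | (congr 1; omega)

theorem sylvester_map_eq_mul_of_dvd {K : Type*} [CommRing K] (φ : ℤ →+* K) {f g : ℤ[X]}
    {h : K[X]} (hh : h.Monic) (hf : h ∣ f.map φ) (hg : h ∣ g.map φ)
    (hd : h.natDegree ≤ g.natDegree + f.natDegree) :
    ∃ C : Matrix (Fin (g.natDegree + f.natDegree))
        (Fin (g.natDegree + f.natDegree - h.natDegree)) K,
      (_root_.sylvester f g).map φ = C * Matrix.of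
        fun (k : Fin (g.natDegree + f.natDegree - h.natDegree))
          (j : Fin (g.natDegree + f.natDegree)) =>
            (X ^ (k : ℕ) * h).coeff (g.natDegree + f.natDegree - 1 - j) := by
  have hrow : ∀ i, ∃ q : Fin (g.natDegree + f.natDegree - h.natDegree) → K, ∀ j,
      φ (_root_.sylvester f g i j) =
        ∑ k, q k * (X ^ (k : ℕ) * h).coeff (g.natDegree + f.natDegree - 1 - j) := by
    intro i
    obtain ⟨a, F, hF, hdeg, hrow⟩ := exists_sylvester_row f g i
    have hdvd : h ∣ (X ^ a * F).map φ := by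
      rw [Polynomial.map_mul, Polynomial.map_pow, map_X]
      exact dvd_mul_of_dvd_right (hF.elim (· ▸ hf) (· ▸ hg)) _
    have hdegP : ((X ^ a * F).map φ).natDegree < g.natDegree + f.natDegree := by
      calc _ ≤ (X ^ a * F).natDegree := natDegree_map_le
        _ ≤ a + F.natDegree := natDegree_mul_le.trans (by rw [natDegree_X_pow])
        _ < _ := hdeg
    obtain ⟨q, hq⟩ := exists_coeff_eq_sum_coeff_X_pow_mul_of_dvd hh hdvd
      (M := g.natDegree + f.natDegree - h.natDegree) (by omega)
    exact ⟨q, fun j => by rw [hrow, ← coeff_map, hq]⟩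
  choose C hC using hrow
  exact ⟨Matrix.of C, by ext i j; rw [Matrix.map_apply, hC, Matrix.mul_apply]; rfl⟩

theorem padicValInt_resultant_ge_p_general (p : ℕ) (hp : p.Prime) (f g : Polynomial ℤ)
    (hf : f.Monic) (hr : _root_.resultant f g ≠ 0) (s : ℕ)
    (hs : 1 ≤ s)
    (hdvd : ∀ n : ℤ, (p : ℤ) ^ s ∣ f.eval n ∧ (p : ℤ) ^ s ∣ g.eval n) :
    p ≤ padicValInt p (_root_.resultant f g) := by
  have := Fact.mk hp
  have hps : (p : ℤ) ∣ (p : ℤ) ^ s := dvd_pow_self _ (by omega)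
  set h := ∏ a : ZMod p, (X - C a)
  have hh : h.Monic := monic_prod_X_sub_C _ _
  have hdeg : h.natDegree = p := by simp [h]
  have hhf : h ∣ f.map (Int.castRingHom (ZMod p)) :=
    prod_X_sub_C_dvd_map_of_forall_dvd_eval fun n => hps.trans (hdvd n).1
  have hhg : h ∣ g.map (Int.castRingHom (ZMod p)) :=
    prod_X_sub_C_dvd_map_of_forall_dvd_eval fun n => hps.trans (hdvd n).2
  have hpf : p ≤ f.natDegree := by
    simpa [hdeg, hf.natDegree_map] using natDegree_le_of_dvd hhf (hf.map _).ne_zero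
  obtain ⟨L, hL⟩ := sylvester_map_eq_mul_of_dvd _ hh hhf hhg (by omega)
  have hpow : (p : ℤ) ^ p ∣ _root_.resultant f g :=
    Matrix.pow_dvd_det_of_map_intCast_eq_mul hL (by simp; omega)
  exact ((padicValInt_dvd_iff p _).mp hpow).resolve_left hr

theorem padicValInt_resultant_ge_p (p : ℕ) (hp : p.Prime) (f g : Polynomial ℤ)
    (hf : f.Monic) (hg : g.Monic) (hr : _root_.resultant f g ≠ 0) (s : ℕ)
    (hs : 1 ≤ s) (hsp : s ≤ p)
    (hdvd : ∀ n : ℤ, (p : ℤ) ^ s ∣ f.eval n ∧ (p : ℤ) ^ s ∣ g.eval n) :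
    p ≤ padicValInt p (_root_.resultant f g) :=
  padicValInt_resultant_ge_p_general p hp f g hf hr s hs hdvd
end
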